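/- arXiv:2108.08670 — 3 statements merged into one kernel-verified Lean document; each statement's English description precedes it below -/
import Mathlib

section
/- Let f: ℝ^d → ℝ be twice continuously differentiable with l-Lipschitz gradient (‖∇f(x) − ∇f(y)‖ ≤ l‖x − y‖ for all x, y) and γ-Lipschitz Hessian in spectral norm (‖∇²f(x) − ∇²f(y)‖ ≤ γ‖x − y‖ for all x, y). Let x* satisfy ∇f(x*) = 0, let β > 0, suppose ∇²f(x*) + βI is invertible, and set K* = (∇²f(x*) + βI)⁻¹, η = ‖K*‖. If x(t+1) = x(t) − K(t)∇f(x(t)), then with z(t) = x(t) − x* and K̃(t) = K(t) − K*, the bound ‖z(t+1)‖ ≤ (ηγ/2)‖z(t)‖² + ηβ‖z(t)‖ + l‖K̃(t)‖‖z(t)‖ holds. -/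
/-!
Write `z = x - x⋆`, `H = ∇²f(x⋆)` and `r = ∇f(x) - H z`. Since `K⋆ (H + β) = 1` and `∇f(x⋆) = 0`,
the new error splits as `z - K ∇f(x) = K⋆ (β z - r) - (K - K⋆) ∇f(x)`. The Taylor remainder
satisfies `‖r‖ ≤ γ/2 ‖z‖²` because the Hessian is `γ`-Lipschitz, and `‖∇f(x)‖ ≤ l ‖z‖` because
the gradient is `l`-Lipschitz and vanishes at `x⋆`; the triangle inequality finishes.
-/

/-- The spectral norm (matrix norm induced by the Euclidean 2-norm) of a real matrix. -/
noncomputable def sNorm {d : ℕ} (M : Matrix (Fin d) (Fin d) ℝ) : ℝ :=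
  ‖(Matrix.toEuclideanCLM (𝕜 := ℝ) M : EuclideanSpace ℝ (Fin d) →L[ℝ] EuclideanSpace ℝ (Fin d))‖

/-- The action of a real matrix on a Euclidean vector. -/
noncomputable def mApply {d : ℕ} (M : Matrix (Fin d) (Fin d) ℝ)
    (v : EuclideanSpace ℝ (Fin d)) : EuclideanSpace ℝ (Fin d) :=
  Matrix.toEuclideanCLM (𝕜 := ℝ) M v

/-- The largest eigenvalue of a (symmetric) real matrix, as the supremum of its real spectrum. -/
noncomputable def lamMax {d : ℕ} (M : Matrix (Fin d) (Fin d) ℝ) : ℝ := sSup (spectrum ℝ M)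

/-- The smallest eigenvalue of a (symmetric) real matrix, as the infimum of its real spectrum. -/
noncomputable def lamMin {d : ℕ} (M : Matrix (Fin d) (Fin d) ℝ) : ℝ := sInf (spectrum ℝ M)

open ContinuousLinearMap

theorem norm_sub_sub_fderiv_le_of_lipschitz_fderiv {E F : Type*} [NormedAddCommGroup E]
    [NormedSpace ℝ E] [NormedAddCommGroup F] [NormedSpace ℝ F] {g : E → F} {g' : E → E →L[ℝ] F} {γ : ℝ}
    (hg : ∀ x, HasFDerivAt g (g' x) x) (hg' : ∀ x y, ‖g' x - g' y‖ ≤ γ * ‖x - y‖) (x y : E) :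
    ‖g x - g y - g' y (x - y)‖ ≤ γ / 2 * ‖x - y‖ ^ 2 := by
  set v := x - y
  let φ : ℝ → F := fun s => g (y + s • v) - g y - s • g' y v
  have hφ : ∀ s, HasDerivAt φ (g' (y + s • v) v - g' y v) s := by
    intro s
    have hline : HasDerivAt (fun s : ℝ => y + s • v) v s := by
      simpa using ((hasDerivAt_id s).smul_const v).const_add y
    have := (((hg _).comp_hasDerivAt s hline).sub_const (g y)).sub
      ((hasDerivAt_id s).smul_const (g' y v))
    rwa [one_smul] at this
  have hbound : ∀ s ∈ Set.Ico (0 : ℝ) 1, ‖g' (y + s • v) v - g' y v‖ ≤ γ * ‖v‖ ^ 2 * s := by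
    intro s hs
    calc ‖g' (y + s • v) v - g' y v‖ ≤ ‖g' (y + s • v) - g' y‖ * ‖v‖ := by
          rw [← sub_apply]; exact le_opNorm _ _
      _ ≤ γ * ‖s • v‖ * ‖v‖ := by gcongr; simpa using hg' (y + s • v) y
      _ = γ * ‖v‖ ^ 2 * s := by rw [norm_smul, Real.norm_of_nonneg hs.1]; ring
  have hB : ∀ s, HasDerivAt (fun s => γ * ‖v‖ ^ 2 * s ^ 2 / 2) (γ * ‖v‖ ^ 2 * s) s := by
    intro s
    refine (((hasDerivAt_pow 2 s).const_mul (γ * ‖v‖ ^ 2)).div_const 2).congr_deriv ?_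
    push_cast
    ring
  have hφ1 := image_norm_le_of_norm_deriv_right_le_deriv_boundary
    (fun s _ => (hφ s).continuousAt.continuousWithinAt) (fun s _ => (hφ s).hasDerivWithinAt)
    (by simp [φ]) hB hbound (Set.right_mem_Icc.2 zero_le_one)
  simp only [φ, one_smul, v, add_sub_cancel] at hφ1
  linarith

theorem sub_apply_eq_of_mul_add_smul_one_eq_one {E : Type*} [NormedAddCommGroup E]
    [NormedSpace ℝ E] {Kstar H : E →L[ℝ] E} {β : ℝ} (hKstar : Kstar * (H + β • 1) = 1)
    (K : E →L[ℝ] E) (z v : E) :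
    z - K v = Kstar (β • z - (v - H z)) - (K - Kstar) v := by
  have hz : Kstar (H z) + β • Kstar z = z := by simpa using congr($hKstar z)
  simp only [sub_apply, map_sub, map_smul]
  linear_combination (norm := module) -hz

theorem norm_sub_apply_sub_le_of_lipschitz {E : Type*} [NormedAddCommGroup E] [NormedSpace ℝ E]
    {g : E → E} {g' : E → E →L[ℝ] E} {l γ β : ℝ} (hg : ∀ x, HasFDerivAt g (g' x) x)
    (hg' : ∀ x y, ‖g' x - g' y‖ ≤ γ * ‖x - y‖) (hgLip : ∀ x y, ‖g x - g y‖ ≤ l * ‖x - y‖)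
    {xstar : E} (hcrit : g xstar = 0) (hβ : 0 ≤ β) {Kstar : E →L[ℝ] E}
    (hKstar : Kstar * (g' xstar + β • 1) = 1) (K : E →L[ℝ] E) (x : E) :
    ‖x - K (g x) - xstar‖ ≤ ‖Kstar‖ * γ / 2 * ‖x - xstar‖ ^ 2 + ‖Kstar‖ * β * ‖x - xstar‖
      + l * ‖K - Kstar‖ * ‖x - xstar‖ := by
  set z := x - xstar
  have hrem : ‖g x - g' xstar z‖ ≤ γ / 2 * ‖z‖ ^ 2 := by
    simpa only [hcrit, sub_zero] using norm_sub_sub_fderiv_le_of_lipschitz_fderiv hg hg' x xstar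
  have hgrad : ‖g x‖ ≤ l * ‖z‖ := by simpa [hcrit] using hgLip x xstar
  rw [sub_right_comm, sub_apply_eq_of_mul_add_smul_one_eq_one hKstar K z (g x)]
  calc _ ≤ ‖Kstar‖ * ‖β • z - (g x - g' xstar z)‖ + ‖K - Kstar‖ * ‖g x‖ :=
        (norm_sub_le _ _).trans (add_le_add (le_opNorm _ _) (le_opNorm _ _))
    _ ≤ ‖Kstar‖ * (β * ‖z‖ + γ / 2 * ‖z‖ ^ 2) + ‖K - Kstar‖ * (l * ‖z‖) := by
        gcongr
        calc _ ≤ ‖β • z‖ + ‖g x - g' xstar z‖ := norm_sub_le _ _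
          _ ≤ β * ‖z‖ + γ / 2 * ‖z‖ ^ 2 := by
            rw [norm_smul, Real.norm_of_nonneg hβ]; gcongr
    _ = _ := by ring

theorem one_step_error_bound_general {d : ℕ}
    (f : EuclideanSpace ℝ (Fin d) → ℝ)
    (Hf : EuclideanSpace ℝ (Fin d) → Matrix (Fin d) (Fin d) ℝ)
    (hHf : ∀ x, HasFDerivAt (gradient f)
      (Matrix.toEuclideanCLM (𝕜 := ℝ) (Hf x) :
        EuclideanSpace ℝ (Fin d) →L[ℝ] EuclideanSpace ℝ (Fin d)) x)
    (l γ : ℝ)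
    (hgradLip : ∀ x y, ‖gradient f x - gradient f y‖ ≤ l * ‖x - y‖)
    (hhessLip : ∀ x y, sNorm (Hf x - Hf y) ≤ γ * ‖x - y‖)
    (xstar : EuclideanSpace ℝ (Fin d)) (hcrit : gradient f xstar = 0)
    (β : ℝ) (hβ : 0 < β) (hinv : IsUnit (Hf xstar + β • 1))
    (Kstar : Matrix (Fin d) (Fin d) ℝ) (hKstar : Kstar = (Hf xstar + β • 1)⁻¹)
    (η : ℝ) (hη : η = sNorm Kstar)
    (x xnext : EuclideanSpace ℝ (Fin d)) (K : Matrix (Fin d) (Fin d) ℝ)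
    (hup : xnext = x - mApply K (gradient f x)) :
    ‖xnext - xstar‖ ≤ η * γ / 2 * ‖x - xstar‖ ^ 2 + η * β * ‖x - xstar‖
      + l * sNorm (K - Kstar) * ‖x - xstar‖ := by
  have hKstar' : Matrix.toEuclideanCLM (𝕜 := ℝ) Kstar *
      (Matrix.toEuclideanCLM (𝕜 := ℝ) (Hf xstar) + β • 1) = 1 := by
    rw [← map_one (Matrix.toEuclideanCLM (𝕜 := ℝ)), ← map_smul, ← map_add, ← map_mul, hKstar,
      Matrix.nonsing_inv_mul _ ((Matrix.isUnit_iff_isUnit_det _).mp hinv)]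
  have hhessLip' : ∀ x y, ‖Matrix.toEuclideanCLM (𝕜 := ℝ) (Hf x) -
      Matrix.toEuclideanCLM (𝕜 := ℝ) (Hf y)‖ ≤ γ * ‖x - y‖ := by
    simpa only [sNorm, map_sub] using hhessLip
  subst hup hη
  simpa only [sNorm, mApply, map_sub] using norm_sub_apply_sub_le_of_lipschitz hHf hhessLip'
    hgradLip hcrit hβ.le hKstar' (Matrix.toEuclideanCLM (𝕜 := ℝ) K) x

/-- One-step error bound of the IPG estimate update:
`‖z(t+1)‖ ≤ (ηγ/2)‖z(t)‖² + ηβ‖z(t)‖ + l‖K̃(t)‖‖z(t)‖`. -/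
theorem one_step_error_bound {d : ℕ}
    (f : EuclideanSpace ℝ (Fin d) → ℝ)
    (Hf : EuclideanSpace ℝ (Fin d) → Matrix (Fin d) (Fin d) ℝ)
    (hf : ContDiff ℝ 2 f)
    (hHf : ∀ x, HasFDerivAt (gradient f)
      (Matrix.toEuclideanCLM (𝕜 := ℝ) (Hf x) :
        EuclideanSpace ℝ (Fin d) →L[ℝ] EuclideanSpace ℝ (Fin d)) x)
    (l γ : ℝ)
    (hgradLip : ∀ x y, ‖gradient f x - gradient f y‖ ≤ l * ‖x - y‖)
    (hhessLip : ∀ x y, sNorm (Hf x - Hf y) ≤ γ * ‖x - y‖)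
    (xstar : EuclideanSpace ℝ (Fin d)) (hcrit : gradient f xstar = 0)
    (β : ℝ) (hβ : 0 < β) (hinv : IsUnit (Hf xstar + β • 1))
    (Kstar : Matrix (Fin d) (Fin d) ℝ) (hKstar : Kstar = (Hf xstar + β • 1)⁻¹)
    (η : ℝ) (hη : η = sNorm Kstar)
    (x xnext : EuclideanSpace ℝ (Fin d)) (K : Matrix (Fin d) (Fin d) ℝ)
    (hup : xnext = x - mApply K (gradient f x)) :
    ‖xnext - xstar‖ ≤ η * γ / 2 * ‖x - xstar‖ ^ 2 + η * β * ‖x - xstar‖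
      + l * sNorm (K - Kstar) * ‖x - xstar‖ :=
  one_step_error_bound_general f Hf hHf l γ hgradLip hhessLip xstar hcrit β hβ hinv Kstar hKstar η
    hη x xnext K hup
end

section
/- Let f: ℝ^d → ℝ be twice continuously differentiable with γ-Lipschitz Hessian in spectral norm. Let x* ∈ ℝ^d, β > 0, with ∇²f(x*) + βI invertible, K* = (∇²f(x*) + βI)⁻¹, η = ‖K*‖. Suppose K(t+1) = K(t) − α(t)((∇²f(x(t)) + βI)K(t) − I) with α(t) ≥ 0, and set ρ(t) = ‖I − α(t)(∇²f(x(t)) + βI)‖, z(t) = x(t) − x*, K̃(t) = K(t) − K*. Then ‖K̃(t+1)‖ ≤ ρ(t)‖K̃(t)‖ + ηγ α(t)‖z(t)‖. -/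
lemma sNorm_nonneg {d : ℕ} (M : Matrix (Fin d) (Fin d) ℝ) : 0 ≤ sNorm M :=
  norm_nonneg _

lemma sNorm_add_le {d : ℕ} (M N : Matrix (Fin d) (Fin d) ℝ) :
    sNorm (M + N) ≤ sNorm M + sNorm N := by
  simp only [sNorm, map_add]; exact norm_add_le _ _

lemma sNorm_mul_le {d : ℕ} (M N : Matrix (Fin d) (Fin d) ℝ) :
    sNorm (M * N) ≤ sNorm M * sNorm N := by
  simp only [sNorm, map_mul]; exact norm_mul_le _ _

set_option synthInstance.maxHeartbeats 400000 in
lemma sNorm_smul {d : ℕ} (c : ℝ) (M : Matrix (Fin d) (Fin d) ℝ) :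
    sNorm (c • M) = |c| * sNorm M := by
  simp only [sNorm, map_smul]
  rw [show |c| = ‖c‖ from rfl]
  exact norm_smul c (Matrix.toEuclideanCLM (𝕜 := ℝ) M :
    EuclideanSpace ℝ (Fin d) →L[ℝ] EuclideanSpace ℝ (Fin d))

/-- One-step pre-conditioner contraction:
`‖K̃(t+1)‖ ≤ ρ(t)‖K̃(t)‖ + ηγα(t)‖z(t)‖` where `ρ(t) = ‖I - α(t)(∇²f(x(t)) + βI)‖`. -/
theorem preconditioner_contraction {d : ℕ}
    (f : EuclideanSpace ℝ (Fin d) → ℝ)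
    (Hf : EuclideanSpace ℝ (Fin d) → Matrix (Fin d) (Fin d) ℝ)
    (hf : ContDiff ℝ 2 f)
    (hHf : ∀ x, HasFDerivAt (gradient f)
      (Matrix.toEuclideanCLM (𝕜 := ℝ) (Hf x) :
        EuclideanSpace ℝ (Fin d) →L[ℝ] EuclideanSpace ℝ (Fin d)) x)
    (γ : ℝ) (hhessLip : ∀ x y, sNorm (Hf x - Hf y) ≤ γ * ‖x - y‖)
    (xstar : EuclideanSpace ℝ (Fin d)) (β : ℝ) (hβ : 0 < β)
    (hinv : IsUnit (Hf xstar + β • 1))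
    (Kstar : Matrix (Fin d) (Fin d) ℝ) (hKstar : Kstar = (Hf xstar + β • 1)⁻¹)
    (η : ℝ) (hη : η = sNorm Kstar)
    (x : EuclideanSpace ℝ (Fin d)) (α : ℝ) (hα : 0 ≤ α)
    (K Knext : Matrix (Fin d) (Fin d) ℝ)
    (hup : Knext = K - α • ((Hf x + β • 1) * K - 1)) :
    sNorm (Knext - Kstar) ≤
      sNorm (1 - α • (Hf x + β • 1)) * sNorm (K - Kstar) + η * γ * α * ‖x - xstar‖ := by
  have h1 : (Hf xstar + β • 1) * Kstar = 1 := by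
    rw [hKstar]
    exact Matrix.mul_nonsing_inv _ ((Matrix.isUnit_iff_isUnit_det _).mp hinv)
  have key : Knext - Kstar =
      (1 - α • (Hf x + β • 1)) * (K - Kstar) + α • ((Hf xstar - Hf x) * Kstar) := by
    have h0 : Hf xstar - Hf x = (Hf xstar + β • 1) - (Hf x + β • 1) := by abel
    rw [hup, h0]
    simp only [sub_mul, mul_sub, one_mul, mul_one, smul_sub, smul_mul_assoc, h1]
    abel
  calc sNorm (Knext - Kstar)
      ≤ sNorm ((1 - α • (Hf x + β • 1)) * (K - Kstar)) +
        sNorm (α • ((Hf xstar - Hf x) * Kstar)) := by rw [key]; exact sNorm_add_le _ _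
    _ ≤ sNorm (1 - α • (Hf x + β • 1)) * sNorm (K - Kstar) + η * γ * α * ‖x - xstar‖ := by
        have h2 := sNorm_mul_le (1 - α • (Hf x + β • 1)) (K - Kstar)
        have h3 := sNorm_mul_le (Hf xstar - Hf x) Kstar
        have h4 := hhessLip xstar x
        rw [norm_sub_rev] at h4
        have h5 : sNorm (α • ((Hf xstar - Hf x) * Kstar)) ≤ α * (γ * ‖x - xstar‖ * η) := by
          rw [sNorm_smul, abs_of_nonneg hα]
          have := sNorm_nonneg Kstar
          have := sNorm_nonneg (Hf xstar - Hf x)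
          rw [hη]
          nlinarith [mul_le_mul_of_nonneg_left h3 hα,
            mul_le_mul_of_nonneg_right h4 (sNorm_nonneg Kstar),
            mul_le_mul_of_nonneg_left (mul_le_mul_of_nonneg_right h4 (sNorm_nonneg Kstar)) hα]
        nlinarith [sNorm_nonneg (Hf xstar - Hf x), sNorm_nonneg Kstar, norm_nonneg (x - xstar)]
end

section
/- Let f: ℝ^d → ℝ be twice continuously differentiable with l-Lipschitz gradient and γ-Lipschitz Hessian in spectral norm, x* a point with ∇f(x*) = 0, β > 0 with ∇²f(x*) + βI invertible, K* = (∇²f(x*) + βI)⁻¹, η = ‖K*‖. Suppose the IPG iterates satisfy x(s+1) = x(s) − K(s)∇f(x(s)) and K(s+1) = K(s) − α(s)((∇²f(x(s)) + βI)K(s) − I) for 0 ≤ s ≤ t, with ρ := sup_s ‖I − α(s)(∇²f(x(s)) + βI)‖ < 1 and α nondecreasing on {0,…,t−1}. Then, with z(s) = x(s) − x* and K̃(0) = K(0) − K*, the combined bound ‖z(t+1)‖ ≤ (ηγ/2)‖z(t)‖² + ηβ‖z(t)‖ + l‖z(t)‖·( ρ^t‖K̃(0)‖ + ηγ α(t−1)(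 ‖z(t−1)‖ + ρ‖z(t−2)‖ + … + ρ^{t−1}‖z(0)‖ ) ) holds for t ≥ 1. -/
/-!
Write `z = x(t) - x*` and `g = ∇f(x(t))`. Since `K* (∇²f(x*) + βI) = I`, the step error splits as
`z(t+1) = K* (β z - (g - ∇²f(x*) z)) - K̃(t) g`, where the bracket is a second-order Taylor
remainder of size at most `γ‖z‖²/2` and `‖g‖ ≤ l‖z‖`. Using `(∇²f(x*) + βI) K* = I` instead, the
pre-conditioner error obeys `K̃(s+1) = (I - α(s) A(s)) K̃(s) - α(s) (∇²f(x(s)) - ∇²f(x*)) K*`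
with `A(s) = ∇²f(x(s)) + βI`, hence the linear recursion `‖K̃(s+1)‖ ≤ ρ‖K̃(s)‖ + α(s) γ η ‖z(s)‖`;
unrolling it and using `α(s) ≤ α(t-1)` bounds `‖K̃(t)‖`.
-/

open Finset

theorem norm_sub_sub_fderiv_apply_le {E F : Type*} [NormedAddCommGroup E] [NormedSpace ℝ E]
    [NormedAddCommGroup F] [NormedSpace ℝ F] {g : E → F} {g' : E → E →L[ℝ] F} {γ : ℝ} {x : E}
    (hg : ∀ z, HasFDerivAt g (g' z) z) (hLip : ∀ z, ‖g' z - g' x‖ ≤ γ * ‖z - x‖) (y : E) :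
    ‖g y - g x - g' x (y - x)‖ ≤ γ / 2 * ‖y - x‖ ^ 2 := by
  set v := y - x
  let φ : ℝ → F := fun τ => g (x + τ • v) - g x - τ • g' x v
  have hφ : ∀ τ, HasDerivAt φ (g' (x + τ • v) v - g' x v) τ := by
    intro τ
    have hline : HasDerivAt (fun τ : ℝ => x + τ • v) v τ := by
      simpa using ((hasDerivAt_id τ).smul_const v).const_add x
    exact (((hg _).comp_hasDerivAt τ hline).sub_const (g x)).sub
      (by simpa using (hasDerivAt_id τ).smul_const (g' x v))
  have hφ' : ∀ τ ∈ Set.Ico (0 : ℝ) 1, ‖g' (x + τ • v) v - g' x v‖ ≤ γ * ‖v‖ ^ 2 * τ := by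
    intro τ hτ
    calc ‖g' (x + τ • v) v - g' x v‖ = ‖(g' (x + τ • v) - g' x) v‖ := rfl
      _ ≤ ‖g' (x + τ • v) - g' x‖ * ‖v‖ := ContinuousLinearMap.le_opNorm _ _
      _ ≤ γ * ‖τ • v‖ * ‖v‖ := by gcongr; simpa using hLip (x + τ • v)
      _ = γ * ‖v‖ ^ 2 * τ := by rw [norm_smul, Real.norm_of_nonneg hτ.1]; ring
  have hB : ∀ τ, HasDerivAt (fun τ => γ / 2 * ‖v‖ ^ 2 * τ ^ 2) (γ * ‖v‖ ^ 2 * τ) τ :=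
    fun τ => ((hasDerivAt_pow 2 τ).const_mul _).congr_deriv (by norm_num; ring)
  have := image_norm_le_of_norm_deriv_right_le_deriv_boundary (a := 0) (b := 1)
    (fun τ _ => (hφ τ).continuousAt.continuousWithinAt) (fun τ _ => (hφ τ).hasDerivWithinAt)
    (by simp [φ]) hB hφ' (Set.right_mem_Icc.2 zero_le_one)
  simpa [φ, v] using this

theorem le_pow_mul_add_sum_of_le_mul_add {u b : ℕ → ℝ} {ρ : ℝ} {N : ℕ} (hρ : 0 ≤ ρ)
    (hu : ∀ n < N, u (n + 1) ≤ ρ * u n + b n) {n : ℕ} (hn : n ≤ N) :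
    u n ≤ ρ ^ n * u 0 + ∑ s ∈ range n, ρ ^ (n - 1 - s) * b s := by
  induction n with
  | zero => simp
  | succ n ih =>
    have hsum : ∑ s ∈ range (n + 1), ρ ^ (n - s) * b s
        = ρ * ∑ s ∈ range n, ρ ^ (n - 1 - s) * b s + b n := by
      rw [sum_range_succ, mul_sum, Nat.sub_self, pow_zero, one_mul]
      congr 1
      refine sum_congr rfl fun s hs => ?_
      rw [show n - s = n - 1 - s + 1 by have := mem_range.1 hs; omega, pow_succ]
      ring
    calc u (n + 1) ≤ ρ * u n + b n := hu n hn
      _ ≤ ρ * (ρ ^ n * u 0 + ∑ s ∈ range n, ρ ^ (n - 1 - s) * b s) + b n := by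
          gcongr; exact ih (by omega)
      _ = ρ ^ (n + 1) * u 0 + ∑ s ∈ range (n + 1), ρ ^ (n + 1 - 1 - s) * b s := by
          rw [Nat.add_sub_cancel, hsum, pow_succ]; ring

section Preconditioner

variable {R : Type*} [NormedRing R] [NormedAlgebra ℝ R]

theorem precond_step_sub_eq {A A' K K' : R} (α : ℝ) (hAK : A' * K' = 1) :
    K - α • (A * K - 1) - K' = (1 - α • A) * (K - K') - α • ((A - A') * K') := by
  simp only [sub_mul, mul_sub, one_mul, smul_sub, smul_mul_assoc, hAK]
  abel

theorem norm_precond_step_sub_le {A A' K K' : R} {α : ℝ} (hα : 0 ≤ α) (hAK : A' * K' = 1) :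
    ‖K - α • (A * K - 1) - K'‖ ≤ ‖1 - α • A‖ * ‖K - K'‖ + α * (‖A - A'‖ * ‖K'‖) := by
  rw [precond_step_sub_eq α hAK]
  calc _ ≤ ‖(1 - α • A) * (K - K')‖ + ‖α • ((A - A') * K')‖ := norm_sub_le _ _
    _ ≤ _ := by
      rw [norm_smul, Real.norm_of_nonneg hα]
      gcongr <;> exact norm_mul_le _ _

theorem norm_precond_sub_le {A K : ℕ → R} {A' K' : R} {α e : ℕ → ℝ} {ρ γ : ℝ} {t : ℕ}
    (hAK : A' * K' = 1) (hK : ∀ s < t, K (s + 1) = K s - α s • (A s * K s - 1))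
    (hα : ∀ s, 0 ≤ α s) (hαmono : ∀ s < t, α s ≤ α (t - 1))
    (hρ : 0 ≤ ρ) (hρA : ∀ s < t, ‖1 - α s • A s‖ ≤ ρ) (hA : ∀ s < t, ‖A s - A'‖ ≤ γ * e s) :
    ‖K t - K'‖ ≤
      ρ ^ t * ‖K 0 - K'‖ + ‖K'‖ * γ * α (t - 1) * ∑ s ∈ range t, ρ ^ (t - 1 - s) * e s := by
  have hstep : ∀ s < t, ‖K (s + 1) - K'‖ ≤ ρ * ‖K s - K'‖ + α s * (‖K'‖ * (γ * e s)) := by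
    intro s hs
    rw [hK s hs]
    calc _ ≤ ‖1 - α s • A s‖ * ‖K s - K'‖ + α s * (‖A s - A'‖ * ‖K'‖) :=
          norm_precond_step_sub_le (hα s) hAK
      _ ≤ ρ * ‖K s - K'‖ + α s * (γ * e s * ‖K'‖) := by
          gcongr
          exacts [hρA s hs, hα s, hA s hs]
      _ = _ := by ring
  calc ‖K t - K'‖
      ≤ ρ ^ t * ‖K 0 - K'‖ + ∑ s ∈ range t, ρ ^ (t - 1 - s) * (α s * (‖K'‖ * (γ * e s))) :=
        le_pow_mul_add_sum_of_le_mul_add (u := fun s => ‖K s - K'‖) hρ hstep le_rfl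
    _ ≤ ρ ^ t * ‖K 0 - K'‖
          + ∑ s ∈ range t, ρ ^ (t - 1 - s) * (α (t - 1) * (‖K'‖ * (γ * e s))) := by
        gcongr with s hs
        · exact mul_nonneg (norm_nonneg _) ((norm_nonneg _).trans (hA s (mem_range.1 hs)))
        · exact hαmono s (mem_range.1 hs)
    _ = _ := by
        rw [mul_sum]
        exact congrArg _ (sum_congr rfl fun _ _ => by ring)

end Preconditioner

theorem norm_sub_apply_le_of_mul_eq_one {E : Type*} [NormedAddCommGroup E] [NormedSpace ℝ E]
    {A K K' : E →L[ℝ] E} {β r : ℝ} {z g : E} (hKA : K' * (A + β • 1) = 1) (hg : ‖g - A z‖ ≤ r) :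
    ‖z - K g‖ ≤ ‖K'‖ * (r + |β| * ‖z‖) + ‖K - K'‖ * ‖g‖ := by
  have hz : K' (A z + β • z) = z := by
    simpa using congrArg (fun T : E →L[ℝ] E => T z) hKA
  have hsplit : z - K g = K' (β • z - (g - A z)) - (K - K') g := by
    conv_lhs => rw [← hz]
    simp only [map_sub, map_add, sub_apply]
    abel
  calc ‖z - K g‖ ≤ ‖K' (β • z - (g - A z))‖ + ‖(K - K') g‖ := hsplit ▸ norm_sub_le _ _
    _ ≤ ‖K'‖ * ‖β • z - (g - A z)‖ + ‖K - K'‖ * ‖g‖ :=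
        add_le_add (K'.le_opNorm _) ((K - K').le_opNorm _)
    _ ≤ ‖K'‖ * (r + |β| * ‖z‖) + ‖K - K'‖ * ‖g‖ := by
        gcongr
        calc ‖β • z - (g - A z)‖ ≤ ‖β • z‖ + ‖g - A z‖ := norm_sub_le _ _
          _ ≤ r + |β| * ‖z‖ := by rw [norm_smul, Real.norm_eq_abs]; linarith

theorem combined_error_bound_general {d : ℕ}
    (f : EuclideanSpace ℝ (Fin d) → ℝ)
    (Hf : EuclideanSpace ℝ (Fin d) → Matrix (Fin d) (Fin d) ℝ)
    (hHf : ∀ x, HasFDerivAt (gradient f)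
      (Matrix.toEuclideanCLM (𝕜 := ℝ) (Hf x) :
        EuclideanSpace ℝ (Fin d) →L[ℝ] EuclideanSpace ℝ (Fin d)) x)
    (l γ : ℝ)
    (hgradLip : ∀ x y, ‖gradient f x - gradient f y‖ ≤ l * ‖x - y‖)
    (hhessLip : ∀ x y, sNorm (Hf x - Hf y) ≤ γ * ‖x - y‖)
    (xstar : EuclideanSpace ℝ (Fin d)) (hcrit : gradient f xstar = 0)
    (β : ℝ) (hβ : 0 < β) (hinv : IsUnit (Hf xstar + β • 1))
    (Kstar : Matrix (Fin d) (Fin d) ℝ) (hKstar : Kstar = (Hf xstar + β • 1)⁻¹)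
    (η : ℝ) (hη : η = sNorm Kstar)
    (x : ℕ → EuclideanSpace ℝ (Fin d)) (K : ℕ → Matrix (Fin d) (Fin d) ℝ) (α : ℕ → ℝ)
    (t : ℕ)
    (hx : ∀ s ≤ t, x (s + 1) = x s - mApply (K s) (gradient f (x s)))
    (hK : ∀ s ≤ t, K (s + 1) = K s - α s • ((Hf (x s) + β • 1) * K s - 1))
    (hαnonneg : ∀ s, 0 ≤ α s)
    (hαmono : ∀ s₁ s₂, s₁ ≤ s₂ → s₂ ≤ t - 1 → α s₁ ≤ α s₂)
    (ρ : ℝ) (hρsup : ∀ s ≤ t, sNorm (1 - α s • (Hf (x s) + β • 1)) ≤ ρ) :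
    ‖x (t + 1) - xstar‖ ≤
      η * γ / 2 * ‖x t - xstar‖ ^ 2 + η * β * ‖x t - xstar‖
        + l * ‖x t - xstar‖ * (ρ ^ t * sNorm (K 0 - Kstar)
            + η * γ * α (t - 1) * ∑ s ∈ Finset.range t, ρ ^ (t - 1 - s) * ‖x s - xstar‖) := by
  have hdet := (Matrix.isUnit_iff_isUnit_det _).mp hinv
  -- `sNorm` is definitionally the norm of the `L2Operator` normed algebra structure on matrices.
  open scoped Matrix.Norms.L2Operator in
  have hKt : sNorm (K t - Kstar) ≤ ρ ^ t * sNorm (K 0 - Kstar)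
      + η * γ * α (t - 1) * ∑ s ∈ range t, ρ ^ (t - 1 - s) * ‖x s - xstar‖ :=
    hη ▸ norm_precond_sub_le (A := fun s => Hf (x s) + β • 1) (e := fun s => ‖x s - xstar‖)
      (hKstar ▸ Matrix.mul_nonsing_inv _ hdet) (fun s hs => hK s hs.le)
      hαnonneg (fun s hs => hαmono s (t - 1) (by omega) le_rfl)
      ((norm_nonneg _).trans (hρsup 0 t.zero_le)) (fun s hs => hρsup s hs.le)
      (fun s _ => by rw [add_sub_add_right_eq_sub]; exact hhessLip (x s) xstar)
  have hKA : Matrix.toEuclideanCLM (𝕜 := ℝ) Kstar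
      * (Matrix.toEuclideanCLM (𝕜 := ℝ) (Hf xstar) + β • 1) = 1 := by
    have := congrArg (Matrix.toEuclideanCLM (𝕜 := ℝ) (n := Fin d))
      (hKstar ▸ Matrix.nonsing_inv_mul _ hdet : Kstar * (Hf xstar + β • 1) = 1)
    rwa [map_mul, map_add, map_smul, map_one] at this
  have htaylor : ‖gradient f (x t) - Matrix.toEuclideanCLM (𝕜 := ℝ) (Hf xstar) (x t - xstar)‖
      ≤ γ / 2 * ‖x t - xstar‖ ^ 2 := by
    have := norm_sub_sub_fderiv_apply_le hHf
      (fun z => by rw [← map_sub]; exact hhessLip z xstar) (x t)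
    rwa [hcrit, sub_zero] at this
  have hstep : ‖x t - xstar - mApply (K t) (gradient f (x t))‖ ≤
      η * (γ / 2 * ‖x t - xstar‖ ^ 2 + β * ‖x t - xstar‖)
        + sNorm (K t - Kstar) * ‖gradient f (x t)‖ := by
    have := norm_sub_apply_le_of_mul_eq_one
      (K := Matrix.toEuclideanCLM (𝕜 := ℝ) (K t)) hKA htaylor
    rw [← map_sub, abs_of_pos hβ] at this
    rwa [hη]
  have hgrad : ‖gradient f (x t)‖ ≤ l * ‖x t - xstar‖ := by
    simpa only [hcrit, sub_zero] using hgradLip (x t) xstar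
  have hKg := mul_le_mul hKt hgrad (norm_nonneg _) ((norm_nonneg _).trans hKt)
  rw [hx t le_rfl, sub_right_comm]
  linarith

/-- Combined error bound (inequality `zt_full` in the proof of Theorem 1): for `t ≥ 1`,
`‖z(t+1)‖ ≤ (ηγ/2)‖z(t)‖² + ηβ‖z(t)‖
  + l‖z(t)‖(ρ^t ‖K̃(0)‖ + ηγ α(t-1) Σ_{s=0}^{t-1} ρ^(t-1-s) ‖z(s)‖)`. -/
theorem combined_error_bound {d : ℕ}
    (f : EuclideanSpace ℝ (Fin d) → ℝ)
    (Hf : EuclideanSpace ℝ (Fin d) → Matrix (Fin d) (Fin d) ℝ)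
    (hf : ContDiff ℝ 2 f)
    (hHf : ∀ x, HasFDerivAt (gradient f)
      (Matrix.toEuclideanCLM (𝕜 := ℝ) (Hf x) :
        EuclideanSpace ℝ (Fin d) →L[ℝ] EuclideanSpace ℝ (Fin d)) x)
    (l γ : ℝ)
    (hgradLip : ∀ x y, ‖gradient f x - gradient f y‖ ≤ l * ‖x - y‖)
    (hhessLip : ∀ x y, sNorm (Hf x - Hf y) ≤ γ * ‖x - y‖)
    (xstar : EuclideanSpace ℝ (Fin d)) (hcrit : gradient f xstar = 0)
    (β : ℝ) (hβ : 0 < β) (hinv : IsUnit (Hf xstar + β • 1))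
    (Kstar : Matrix (Fin d) (Fin d) ℝ) (hKstar : Kstar = (Hf xstar + β • 1)⁻¹)
    (η : ℝ) (hη : η = sNorm Kstar)
    (x : ℕ → EuclideanSpace ℝ (Fin d)) (K : ℕ → Matrix (Fin d) (Fin d) ℝ) (α : ℕ → ℝ)
    (t : ℕ) (ht : 1 ≤ t)
    (hx : ∀ s ≤ t, x (s + 1) = x s - mApply (K s) (gradient f (x s)))
    (hK : ∀ s ≤ t, K (s + 1) = K s - α s • ((Hf (x s) + β • 1) * K s - 1))
    (hαnonneg : ∀ s, 0 ≤ α s)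
    (hαmono : ∀ s₁ s₂, s₁ ≤ s₂ → s₂ ≤ t - 1 → α s₁ ≤ α s₂)
    (ρ : ℝ) (hρsup : ∀ s ≤ t, sNorm (1 - α s • (Hf (x s) + β • 1)) ≤ ρ) (hρ1 : ρ < 1) :
    ‖x (t + 1) - xstar‖ ≤
      η * γ / 2 * ‖x t - xstar‖ ^ 2 + η * β * ‖x t - xstar‖
        + l * ‖x t - xstar‖ * (ρ ^ t * sNorm (K 0 - Kstar)
            + η * γ * α (t - 1) * ∑ s ∈ Finset.range t, ρ ^ (t - 1 - s) * ‖x s - xstar‖) :=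
  combined_error_bound_general f Hf hHf l γ hgradLip hhessLip xstar hcrit β hβ hinv Kstar hKstar η
    hη x K α t hx hK hαnonneg hαmono ρ hρsup
end
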